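/- A mechanism φ is strategyproof if and only if it is separation monotonic (separation responsive and separation direct), separation upper invariant, and separation lower invariant. -/

import Mathlib

open Finset

/-- An ordered partition `M_1 P ... P M_K` of a finite set `α` is encoded by a rank
function `R : α → ℕ`: alternative `a` lies in class `M_{R a}` (0-indexed), and lower
rank means more preferred.  `j` is weakly preferred to `a` iff `R j ≤ R a`. -/
def classOf {α : Type} [Fintype α] (R : α → ℕ) (k : ℕ) : Finset α :=
  Finset.univ.filter fun a => R a = k

/-- `probOf x A = x_A = ∑_{a ∈ A} x_a`. -/
def probOf {α : Type} [Fintype α] (x : α → ℝ) (A : Finset α) : ℝ := ∑ a ∈ A, x a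

/-- `x` is a lottery (probability distribution) on `α`. -/
def IsLottery {α : Type} [Fintype α] (x : α → ℝ) : Prop :=
  (∀ a, 0 ≤ x a) ∧ ∑ a, x a = 1

/-- `x` first order-stochastically dominates `y` at `R`. -/
def SD {α : Type} [Fintype α] (R : α → ℕ) (x y : α → ℝ) : Prop :=
  ∀ a : α, ∑ j ∈ Finset.univ.filter (fun j => R j ≤ R a), x j ≥
           ∑ j ∈ Finset.univ.filter (fun j => R j ≤ R a), y j

/-- A rank function is canonical if its range is an initial segment of ℕ,
i.e. all indifference classes `M_1, …, M_K` are nonempty. -/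
def Canonical {α : Type} (R : α → ℕ) : Prop :=
  ∀ a : α, ∀ k, k ≤ R a → ∃ b, R b = k

/-- Strategyproofness: for all preference orders `R, R'`, `φ(R)` first
order-stochastically dominates `φ(R')` at `R`. -/
def Strategyproof {α : Type} [Fintype α] (φ : (α → ℕ) → α → ℝ) : Prop :=
  ∀ R R' : α → ℕ, Canonical R → Canonical R' → SD R (φ R) (φ R')

/-- `(R, R')` is a separation with split at index `κ`: `R'` splits the indifference
class `M_κ` of `R` into two nonempty parts `M_κ^1 = classOf R' κ` (preferred) and
`M_κ^2 = classOf R' (κ+1)`, all other classes unchanged (classes below `κ` keep their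
rank, classes above `κ` are shifted by one). -/
def IsSeparation {α : Type} [Fintype α] (R R' : α → ℕ) (κ : ℕ) : Prop :=
  Canonical R ∧
  (∀ a, R a < κ → R' a = R a) ∧
  (∀ a, R a = κ → R' a = κ ∨ R' a = κ + 1) ∧
  (∀ a, κ < R a → R' a = R a + 1) ∧
  (∃ a, R a = κ ∧ R' a = κ) ∧
  (∃ a, R a = κ ∧ R' a = κ + 1)

/-- Separation upper invariance: the probability of every class ranked above the
split class is unchanged. -/
def SepUpperInvariant {α : Type} [Fintype α] (φ : (α → ℕ) → α → ℝ) : Prop :=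
  ∀ R R' κ, IsSeparation R R' κ →
    ∀ k < κ, probOf (φ R) (classOf R k) = probOf (φ R') (classOf R k)

/-- Separation lower invariance: the probability of every class ranked below the
split class is unchanged. -/
def SepLowerInvariant {α : Type} [Fintype α] (φ : (α → ℕ) → α → ℝ) : Prop :=
  ∀ R R' κ, IsSeparation R R' κ →
    ∀ k, κ < k → probOf (φ R) (classOf R k) = probOf (φ R') (classOf R k)

/-- Separation responsiveness: `φ_{M_κ^1}(R') ≥ φ_{M_κ^1}(R)` and
`φ_{M_κ^2}(R') ≤ φ_{M_κ^2}(R)`. -/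
def SepResponsive {α : Type} [Fintype α] (φ : (α → ℕ) → α → ℝ) : Prop :=
  ∀ R R' κ, IsSeparation R R' κ →
    probOf (φ R') (classOf R' κ) ≥ probOf (φ R) (classOf R' κ) ∧
    probOf (φ R') (classOf R' (κ + 1)) ≤ probOf (φ R) (classOf R' (κ + 1))

/-- Separation directness: if the probability of some class changes under a
separation, then both the probabilities of `M_κ^1` and of `M_κ^2` change. -/
def SepDirect {α : Type} [Fintype α] (φ : (α → ℕ) → α → ℝ) : Prop :=
  ∀ R R' κ, IsSeparation R R' κ →
    (∃ k, probOf (φ R) (classOf R k) ≠ probOf (φ R') (classOf R k)) →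
    probOf (φ R') (classOf R' κ) ≠ probOf (φ R) (classOf R' κ) ∧
    probOf (φ R') (classOf R' (κ + 1)) ≠ probOf (φ R) (classOf R' (κ + 1))

/-!
If `φ` is strategyproof and `(R, R')` is a separation, dominance at `R` and at `R'` pins down
the probability of every upper contour set of `R` (each is also an upper contour set of `R'`),
so every class of `R` keeps its probability: this gives upper and lower invariance, and
directness holds vacuously; dominance at `R'` then gives responsiveness.

Conversely, upper and lower invariance, together with total mass one, say that every class of
`R` keeps its probability under a separation. For an upper contour set `A` of the true order
`R`, merging classes inside `A` and inside its complement therefore shows that `A` has the same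
probability at `R` as at the two-class order `A P Aᶜ`. From a misreport `R'` one reaches this
two-class order by splitting each class into its parts inside and outside `A`, bubbling the
parts inside `A` to the front and merging; responsiveness makes each part inside `A` weakly
gain along the way, so `A` has at most that probability at `R'`.
-/

section RankFunctions

variable {α : Type} [Fintype α]

def upperContour (R : α → ℕ) (k : ℕ) : Finset α :=
  univ.filter fun a => R a ≤ k

@[simp]
lemma mem_classOf {R : α → ℕ} {k : ℕ} {a : α} : a ∈ classOf R k ↔ R a = k := by
  simp [classOf]

@[simp]
lemma mem_upperContour {R : α → ℕ} {k : ℕ} {a : α} :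
    a ∈ upperContour R k ↔ R a ≤ k := by
  simp [upperContour]

lemma probOf_univ {x : α → ℝ} (hx : IsLottery x) : probOf x univ = 1 := hx.2

lemma probOf_empty (x : α → ℝ) : probOf x ∅ = 0 := sum_empty

lemma probOf_union [DecidableEq α] (x : α → ℝ) {s t : Finset α} (h : Disjoint s t) :
    probOf x (s ∪ t) = probOf x s + probOf x t := sum_union h

lemma upperContour_zero (R : α → ℕ) : upperContour R 0 = classOf R 0 := by
  ext a; simp

lemma probOf_upperContour_succ (x : α → ℝ) (R : α → ℕ) (k : ℕ) :
    probOf x (upperContour R (k + 1)) =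
      probOf x (upperContour R k) + probOf x (classOf R (k + 1)) := by
  classical
  rw [← probOf_union]
  · congr 1; ext a; simp only [mem_union, mem_upperContour, mem_classOf]; omega
  · rw [disjoint_left]; intro a; simp only [mem_upperContour, mem_classOf]; omega

lemma probOf_classOf_eq_of_upperContour {x y : α → ℝ} {R : α → ℕ}
    (h : ∀ k, probOf x (upperContour R k) = probOf y (upperContour R k)) (k : ℕ) :
    probOf x (classOf R k) = probOf y (classOf R k) := by
  cases k with
  | zero => simpa [upperContour_zero] using h 0
  | succ k =>
    linarith [h k, h (k + 1), probOf_upperContour_succ x R k, probOf_upperContour_succ y R k]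

lemma upperContour_eq_univ {R : α → ℕ} {k : ℕ} (h : ∀ a, R a ≤ k) :
    upperContour R k = univ := by
  ext a; simp [h a]

lemma SD.probOf_upperContour_le {R : α → ℕ} (hR : Canonical R) {x y : α → ℝ}
    (hx : IsLottery x) (hy : IsLottery y) (h : SD R x y) (k : ℕ) :
    probOf y (upperContour R k) ≤ probOf x (upperContour R k) := by
  by_cases hk : ∃ b, k ≤ R b
  · obtain ⟨b, hb⟩ := hk
    obtain ⟨c, rfl⟩ := hR b k hb
    exact h c
  · push Not at hk
    rw [upperContour_eq_univ fun a => (hk a).le, probOf_univ hx, probOf_univ hy]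

lemma sum_probOf_classOf {R : α → ℕ} {N : ℕ} (hN : ∀ a, R a < N) (x : α → ℝ) :
    ∑ k ∈ range N, probOf x (classOf R k) = ∑ a, x a :=
  sum_fiberwise_of_maps_to (fun a _ => mem_range.2 (hN a)) x

namespace IsSeparation

variable {R R' : α → ℕ} {κ : ℕ}

lemma rank_cases (h : IsSeparation R R' κ) (a : α) :
    (R a < κ ∧ R' a = R a) ∨ (R a = κ ∧ (R' a = κ ∨ R' a = κ + 1)) ∨
      (κ < R a ∧ R' a = R a + 1) := by
  obtain ⟨-, hlt, heq, hgt, -⟩ := h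
  rcases lt_trichotomy (R a) κ with ha | ha | ha
  · exact Or.inl ⟨ha, hlt a ha⟩
  · exact Or.inr (Or.inl ⟨ha, heq a ha⟩)
  · exact Or.inr (Or.inr ⟨ha, hgt a ha⟩)

lemma canonical_right (h : IsSeparation R R' κ) : Canonical R' := by
  intro a k hk
  obtain ⟨hR, -, -, -, ⟨b₁, hb₁⟩, ⟨b₂, hb₂⟩⟩ := id h
  rcases lt_trichotomy k κ with hkκ | rfl | hkκ
  · obtain ⟨b, hb⟩ := hR a k (by rcases h.rank_cases a with h' | h' | h' <;> omega)
    exact ⟨b, by rcases h.rank_cases b with h' | h' | h' <;> omega⟩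
  · exact ⟨b₁, hb₁.2⟩
  · rcases Nat.eq_or_lt_of_le hkκ with rfl | hkκ
    · exact ⟨b₂, hb₂.2⟩
    obtain ⟨b, hb⟩ := hR a (k - 1) (by rcases h.rank_cases a with h' | h' | h' <;> omega)
    exact ⟨b, by rcases h.rank_cases b with h' | h' | h' <;> omega⟩

lemma upperContour_of_lt (h : IsSeparation R R' κ) {k : ℕ} (hk : k < κ) :
    upperContour R' k = upperContour R k := by
  ext a; simp only [mem_upperContour]; rcases h.rank_cases a with h' | h' | h' <;> omega

lemma upperContour_succ_of_le (h : IsSeparation R R' κ) {k : ℕ} (hk : κ ≤ k) :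
    upperContour R' (k + 1) = upperContour R k := by
  ext a; simp only [mem_upperContour]; rcases h.rank_cases a with h' | h' | h' <;> omega

end IsSeparation

end RankFunctions

section Invariance

variable {α : Type} [Fintype α] {φ : (α → ℕ) → α → ℝ}

def SepInvariant (φ : (α → ℕ) → α → ℝ) : Prop :=
  ∀ R R' κ, IsSeparation R R' κ →
    ∀ k, probOf (φ R) (classOf R k) = probOf (φ R') (classOf R k)

namespace SepInvariant

lemma sepUpperInvariant (h : SepInvariant φ) : SepUpperInvariant φ :=
  fun R R' κ hs k _ => h R R' κ hs k

lemma sepLowerInvariant (h : SepInvariant φ) : SepLowerInvariant φ :=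
  fun R R' κ hs k _ => h R R' κ hs k

lemma sepDirect (h : SepInvariant φ) : SepDirect φ :=
  fun R R' κ hs ⟨k, hk⟩ => absurd (h R R' κ hs k) hk

end SepInvariant

/-- The split class keeps its probability because all other classes do and both lotteries
have total mass one. -/
lemma sepInvariant_of_upper_lower (hlot : ∀ R, IsLottery (φ R)) (hup : SepUpperInvariant φ)
    (hlow : SepLowerInvariant φ) : SepInvariant φ := by
  intro R R' κ hs k
  rcases lt_trichotomy k κ with hk | rfl | hk
  · exact hup R R' κ hs k hk
  · obtain ⟨a, ha, -⟩ := hs.2.2.2.2.1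
    have hN : ∀ b, R b < univ.sup R + 1 := fun b => Nat.lt_succ_of_le (le_sup (mem_univ b))
    have hk : k ∈ range (univ.sup R + 1) := mem_range.2 (ha ▸ hN a)
    have hrest : ∑ j ∈ (range (univ.sup R + 1)).erase k, probOf (φ R) (classOf R j) =
        ∑ j ∈ (range (univ.sup R + 1)).erase k, probOf (φ R') (classOf R j) :=
      sum_congr rfl fun j hj => (ne_of_mem_erase hj).lt_or_gt.elim
        (hup R R' k hs j) (hlow R R' k hs j)
    have htot := (sum_probOf_classOf hN (φ R)).trans (hlot R).2
    have htot' := (sum_probOf_classOf hN (φ R')).trans (hlot R').2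
    rw [← add_sum_erase _ _ hk] at htot htot'
    linarith
  · exact hlow R R' κ hs k hk

namespace Strategyproof

variable {R R' : α → ℕ} {κ : ℕ}

lemma probOf_upperContour_eq (hsp : Strategyproof φ) (hlot : ∀ R, IsLottery (φ R))
    (hs : IsSeparation R R' κ) (k : ℕ) :
    probOf (φ R) (upperContour R k) = probOf (φ R') (upperContour R k) := by
  have hR := hs.1
  have hR' := hs.canonical_right
  refine le_antisymm ?_ ((hsp R R' hR hR').probOf_upperContour_le hR (hlot R) (hlot R') k)
  rcases lt_or_ge k κ with hk | hk
  · rw [← hs.upperContour_of_lt hk]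
    exact (hsp R' R hR' hR).probOf_upperContour_le hR' (hlot R') (hlot R) k
  · rw [← hs.upperContour_succ_of_le hk]
    exact (hsp R' R hR' hR).probOf_upperContour_le hR' (hlot R') (hlot R) (k + 1)

lemma sepInvariant (hsp : Strategyproof φ) (hlot : ∀ R, IsLottery (φ R)) : SepInvariant φ :=
  fun _ _ _ hs => probOf_classOf_eq_of_upperContour (hsp.probOf_upperContour_eq hlot hs)

lemma sepResponsive (hsp : Strategyproof φ) (hlot : ∀ R, IsLottery (φ R)) :
    SepResponsive φ := by
  intro R R' κ hs
  have hR' := hs.canonical_right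
  have hdom := (hsp R' R hR' hs.1).probOf_upperContour_le hR' (hlot R') (hlot R)
  have heq := hsp.probOf_upperContour_eq hlot hs
  constructor
  · cases κ with
    | zero => simpa [upperContour_zero] using hdom 0
    | succ j =>
      have hj := hdom (j + 1)
      rw [probOf_upperContour_succ, probOf_upperContour_succ,
        hs.upperContour_of_lt (Nat.lt_succ_self j)] at hj
      linarith [heq j]
  · have hκ := heq κ
    rw [← hs.upperContour_succ_of_le le_rfl, probOf_upperContour_succ,
      probOf_upperContour_succ] at hκ
    linarith [hdom κ]

end Strategyproof

end Invariance

section OrderedPartitions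

variable {α : Type}

/-- The classes `M_1, …, M_K` of a weak order, listed from best to worst; `toRank` turns such a
list into the rank function the mechanism is applied to. -/
structure IsOrderedPartition (l : List (Finset α)) : Prop where
  pairwise_disjoint : l.Pairwise Disjoint
  nonempty : ∀ s ∈ l, s.Nonempty
  exists_mem : ∀ a, ∃ s ∈ l, a ∈ s

lemma IsOrderedPartition.perm {l l' : List (Finset α)} (hl : IsOrderedPartition l)
    (h : l.Perm l') : IsOrderedPartition l' where
  pairwise_disjoint := hl.pairwise_disjoint.perm h fun hd => hd.symm
  nonempty s hs := hl.nonempty s (h.mem_iff.2 hs)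
  exists_mem a := (hl.exists_mem a).imp fun _ hs => ⟨h.mem_iff.1 hs.1, hs.2⟩

variable [DecidableEq α]

namespace IsOrderedPartition

lemma union_cons_iff {E F : Finset α} {m : List (Finset α)} (hd : Disjoint E F)
    (hE : E.Nonempty) (hF : F.Nonempty) :
    IsOrderedPartition ((E ∪ F) :: m) ↔ IsOrderedPartition (E :: F :: m) := by
  constructor
  · rintro ⟨hpw, hne, hmem⟩
    refine ⟨?_, ?_, ?_⟩
    · simp_all [List.pairwise_cons, disjoint_union_left]
    · simp_all
    · intro a; obtain ⟨s, hs, ha⟩ := hmem a; aesop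
  · rintro ⟨hpw, hne, hmem⟩
    refine ⟨?_, ?_, ?_⟩
    · simp_all [List.pairwise_cons, disjoint_union_left]
    · simp_all [hE.mono subset_union_left]
    · intro a; obtain ⟨s, hs, ha⟩ := hmem a; aesop

lemma split_iff {l₁ l₂ : List (Finset α)} {E F : Finset α} (hd : Disjoint E F)
    (hE : E.Nonempty) (hF : F.Nonempty) :
    IsOrderedPartition (l₁ ++ (E ∪ F) :: l₂) ↔
      IsOrderedPartition (l₁ ++ E :: F :: l₂) := by
  have h₁ : (l₁ ++ (E ∪ F) :: l₂).Perm ((E ∪ F) :: (l₁ ++ l₂)) := List.perm_middle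
  have h₂ : (l₁ ++ E :: F :: l₂).Perm (E :: F :: (l₁ ++ l₂)) :=
    List.perm_middle.trans (List.perm_middle.cons E)
  exact ⟨fun h => ((union_cons_iff hd hE hF).1 (h.perm h₁)).perm h₂.symm,
    fun h => ((union_cons_iff hd hE hF).2 (h.perm h₂)).perm h₁.symm⟩

end IsOrderedPartition

def toRank (l : List (Finset α)) (a : α) : ℕ :=
  l.findIdx (a ∈ ·)

lemma toRank_cons (s : Finset α) (l : List (Finset α)) (a : α) :
    toRank (s :: l) a = if a ∈ s then 0 else toRank l a + 1 := by
  simp [toRank, List.findIdx_cons, cond_eq_ite]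

lemma toRank_lt_length {l : List (Finset α)} {a : α} (h : ∃ s ∈ l, a ∈ s) :
    toRank l a < l.length :=
  List.findIdx_lt_length_of_exists (by simpa using h)

lemma toRank_append_of_mem {l₁ l₂ : List (Finset α)} {a : α} (h : ∃ s ∈ l₁, a ∈ s) :
    toRank (l₁ ++ l₂) a = toRank l₁ a := by
  have hlt := toRank_lt_length h
  unfold toRank at *
  rw [List.findIdx_append, if_pos hlt]

lemma toRank_append_of_forall_notMem {l₁ l₂ : List (Finset α)} {a : α}
    (h : ∀ s ∈ l₁, a ∉ s) :
    toRank (l₁ ++ l₂) a = l₁.length + toRank l₂ a := by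
  have : toRank l₁ a = l₁.length := List.findIdx_eq_length_of_false (by simpa using h)
  rw [toRank, List.findIdx_append, if_neg (by unfold toRank at this; omega), toRank, add_comm]

lemma toRank_eq_of_mem_getElem {l : List (Finset α)} (hl : l.Pairwise Disjoint) {k : ℕ}
    (hk : k < l.length) {a : α} (ha : a ∈ l[k]) : toRank l a = k := by
  rw [toRank, List.findIdx_eq hk]
  refine ⟨by simpa using ha, fun j hj => ?_⟩
  have := List.pairwise_iff_getElem.1 hl j k (hj.trans hk) hk hj
  simpa using disjoint_right.1 this ha

lemma IsOrderedPartition.canonical_toRank {l : List (Finset α)} (hl : IsOrderedPartition l) :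
    Canonical (toRank l) := by
  intro a k hk
  have hlt := toRank_lt_length (hl.exists_mem a)
  obtain ⟨b, hb⟩ := hl.nonempty l[k] (List.getElem_mem _)
  exact ⟨b, toRank_eq_of_mem_getElem hl.pairwise_disjoint _ hb⟩

variable [Fintype α]

lemma classOf_toRank {l : List (Finset α)} (hl : l.Pairwise Disjoint) {k : ℕ}
    (hk : k < l.length) :
    classOf (toRank l) k = l[k] := by
  ext a
  rw [mem_classOf]
  refine ⟨?_, toRank_eq_of_mem_getElem hl hk⟩
  rintro rfl
  exact of_decide_eq_true (List.findIdx_getElem (w := hk))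

lemma classOf_toRank_append {l₁ l₂ : List (Finset α)} {s : Finset α}
    (hl : (l₁ ++ s :: l₂).Pairwise Disjoint) :
    classOf (toRank (l₁ ++ s :: l₂)) l₁.length = s := by
  simpa using classOf_toRank hl (k := l₁.length) (by simp)

lemma isSeparation_split {l₁ l₂ : List (Finset α)} {F₁ F₂ : Finset α}
    (hl : IsOrderedPartition (l₁ ++ (F₁ ∪ F₂) :: l₂)) (h₁ : F₁.Nonempty)
    (h₂ : F₂.Nonempty) (hd : Disjoint F₁ F₂) :
    IsSeparation (toRank (l₁ ++ (F₁ ∪ F₂) :: l₂)) (toRank (l₁ ++ F₁ :: F₂ :: l₂))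
      l₁.length := by
  have hout : ∀ a ∈ F₁ ∪ F₂, ∀ s ∈ l₁, a ∉ s := fun a ha s hs =>
    disjoint_right.1 ((List.pairwise_append.1 hl.pairwise_disjoint).2.2 s hs _ (by simp)) ha
  have key : ∀ a, (toRank l₁ a < l₁.length ∧
      toRank (l₁ ++ (F₁ ∪ F₂) :: l₂) a = toRank l₁ a ∧
      toRank (l₁ ++ F₁ :: F₂ :: l₂) a = toRank l₁ a) ∨
      (toRank (l₁ ++ (F₁ ∪ F₂) :: l₂) a =
          l₁.length + toRank ((F₁ ∪ F₂) :: l₂) a ∧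
      toRank (l₁ ++ F₁ :: F₂ :: l₂) a = l₁.length + toRank (F₁ :: F₂ :: l₂) a) := by
    intro a
    by_cases h : ∃ s ∈ l₁, a ∈ s
    · exact Or.inl ⟨toRank_lt_length h, toRank_append_of_mem h, toRank_append_of_mem h⟩
    · push Not at h
      exact Or.inr ⟨toRank_append_of_forall_notMem h, toRank_append_of_forall_notMem h⟩
  have hcons : ∀ a,
      (toRank ((F₁ ∪ F₂) :: l₂) a = 0 ∧ toRank (F₁ :: F₂ :: l₂) a ≤ 1) ∨
      (toRank ((F₁ ∪ F₂) :: l₂) a = toRank l₂ a + 1 ∧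
        toRank (F₁ :: F₂ :: l₂) a = toRank l₂ a + 2) := by
    intro a
    by_cases h₁ : a ∈ F₁ <;> by_cases h₂ : a ∈ F₂ <;> simp [toRank_cons, h₁, h₂]
  refine ⟨hl.canonical_toRank, fun a ha => ?_, fun a ha => ?_, fun a ha => ?_, ?_, ?_⟩
  all_goals try (rcases key a with h | h <;> rcases hcons a with h' | h' <;> omega)
  · obtain ⟨b, hb⟩ := h₁
    refine ⟨b, ?_, ?_⟩ <;> rw [toRank_append_of_forall_notMem (hout b (by simp [hb]))] <;>
      simp [toRank_cons, hb]
  · obtain ⟨b, hb⟩ := h₂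
    have hb₁ : b ∉ F₁ := disjoint_right.1 hd hb
    refine ⟨b, ?_, ?_⟩ <;> rw [toRank_append_of_forall_notMem (hout b (by simp [hb]))] <;>
      simp [toRank_cons, hb, hb₁]

end OrderedPartitions

section Mechanisms

variable {α : Type} [Fintype α] [DecidableEq α] {φ : (α → ℕ) → α → ℝ}

lemma SepInvariant.probOf_split (hinv : SepInvariant φ) {l₁ l₂ : List (Finset α)}
    {F₁ F₂ : Finset α} (hl : IsOrderedPartition (l₁ ++ (F₁ ∪ F₂) :: l₂))
    (h₁ : F₁.Nonempty) (h₂ : F₂.Nonempty) (hd : Disjoint F₁ F₂) :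
    ∀ s ∈ l₁ ++ (F₁ ∪ F₂) :: l₂,
      probOf (φ (toRank (l₁ ++ F₁ :: F₂ :: l₂))) s =
        probOf (φ (toRank (l₁ ++ (F₁ ∪ F₂) :: l₂))) s := by
  intro s hs
  obtain ⟨k, hk, rfl⟩ := List.mem_iff_getElem.1 hs
  rw [← classOf_toRank hl.pairwise_disjoint hk]
  exact (hinv _ _ _ (isSeparation_split hl h₁ h₂ hd) k).symm

lemma SepResponsive.probOf_split_le (hresp : SepResponsive φ) {l₁ l₂ : List (Finset α)}
    {F₁ F₂ : Finset α} (hl : IsOrderedPartition (l₁ ++ (F₁ ∪ F₂) :: l₂))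
    (h₁ : F₁.Nonempty) (h₂ : F₂.Nonempty) (hd : Disjoint F₁ F₂) :
    probOf (φ (toRank (l₁ ++ (F₁ ∪ F₂) :: l₂))) F₁ ≤
      probOf (φ (toRank (l₁ ++ F₁ :: F₂ :: l₂))) F₁ := by
  have h := (hresp _ _ _ (isSeparation_split hl h₁ h₂ hd)).1
  have hl' := (IsOrderedPartition.split_iff hd h₁ h₂).1 hl
  rwa [classOf_toRank_append hl'.pairwise_disjoint] at h

/-- Swap two adjacent classes by merging them and splitting the union the other way round. -/
lemma probOf_swap (hinv : SepInvariant φ) (hresp : SepResponsive φ) {l₁ l₂ : List (Finset α)}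
    {E F : Finset α} (hl : IsOrderedPartition (l₁ ++ E :: F :: l₂)) :
    (∀ s ∈ l₁ ++ l₂, probOf (φ (toRank (l₁ ++ F :: E :: l₂))) s =
      probOf (φ (toRank (l₁ ++ E :: F :: l₂))) s) ∧
    probOf (φ (toRank (l₁ ++ E :: F :: l₂))) F ≤
      probOf (φ (toRank (l₁ ++ F :: E :: l₂))) F := by
  have hd : Disjoint E F :=
    List.rel_of_pairwise_cons (List.pairwise_append.1 hl.pairwise_disjoint).2.1 (by simp)
  have hE := hl.nonempty E (by simp)
  have hF := hl.nonempty F (by simp)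
  have hM := (IsOrderedPartition.split_iff hd hE hF).2 hl
  have hM' : IsOrderedPartition (l₁ ++ (F ∪ E) :: l₂) := union_comm E F ▸ hM
  have hEF := hinv.probOf_split hM hE hF hd
  have hFE := hinv.probOf_split hM' hF hE hd.symm
  rw [union_comm F E] at hFE
  refine ⟨fun s hs => ?_, ?_⟩
  · have hs' : s ∈ l₁ ++ (E ∪ F) :: l₂ := by simp at hs ⊢; tauto
    rw [hFE s hs', hEF s hs']
  · have hunion := hEF (E ∪ F) (by simp)
    rw [probOf_union _ hd, probOf_union _ hd] at hunion
    have hgain := hresp.probOf_split_le hM hE hF hd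
    have hgain' := hresp.probOf_split_le hM' hF hE hd.symm
    rw [union_comm F E] at hgain'
    linarith

lemma probOf_bubble (hinv : SepInvariant φ) (hresp : SepResponsive φ) {C : Finset α}
    {Y Z : List (Finset α)} : ∀ {X : List (Finset α)},
    IsOrderedPartition (X ++ C :: (Y ++ Z)) →
    (∀ s ∈ X ++ Z, probOf (φ (toRank (X ++ Y ++ C :: Z))) s =
      probOf (φ (toRank (X ++ C :: (Y ++ Z)))) s) ∧
    ∀ s ∈ Y, probOf (φ (toRank (X ++ C :: (Y ++ Z)))) s ≤
      probOf (φ (toRank (X ++ Y ++ C :: Z))) s := by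
  induction Y with
  | nil => simp
  | cons F Y ih =>
    intro X hl
    have hswap := probOf_swap hinv hresp (l₁ := X) (l₂ := Y ++ Z) hl
    have hl' : IsOrderedPartition ((X ++ [F]) ++ C :: (Y ++ Z)) := by
      simpa using hl.perm ((List.Perm.swap F C _).append_left X)
    obtain ⟨ihout, ihin⟩ := ih hl'
    simp only [List.append_assoc, List.cons_append, List.nil_append] at ihout ihin ⊢
    refine ⟨fun s hs => ?_, fun s hs => ?_⟩
    · rw [ihout s (by simp at hs ⊢; tauto), hswap.1 s (by simp at hs ⊢; tauto)]
    · rcases List.mem_cons.1 hs with rfl | hs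
      · exact hswap.2.trans (ihout s (by simp)).ge
      · exact (hswap.1 s (by simp [hs])).ge.trans (ihin s hs)

lemma probOf_filter_append_filter (hinv : SepInvariant φ) (hresp : SepResponsive φ)
    (p : Finset α → Bool) {m : List (Finset α)} : ∀ {X : List (Finset α)},
    IsOrderedPartition (X ++ m) →
    (∀ s ∈ X, probOf (φ (toRank (X ++ (m.filter p ++ m.filter (!p ·))))) s =
      probOf (φ (toRank (X ++ m))) s) ∧
    ∀ s ∈ m, p s → probOf (φ (toRank (X ++ m))) s ≤
      probOf (φ (toRank (X ++ (m.filter p ++ m.filter (!p ·))))) s := by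
  induction m with
  | nil => simp
  | cons C m ih =>
    intro X hl
    obtain ⟨ihX, ihm⟩ := ih (X := X ++ [C]) (by simpa using hl)
    simp only [List.append_assoc, List.singleton_append] at ihX ihm
    by_cases hC : p C
    · simp only [List.filter_cons, hC, if_true, Bool.not_true, Bool.false_eq_true, if_false,
        List.cons_append]
      refine ⟨fun s hs => ihX s (by simp [hs]), fun s hs _ => ?_⟩
      rcases List.mem_cons.1 hs with rfl | hs
      · exact (ihX s (by simp)).ge
      · exact ihm s hs ‹_›
    · have hl' : IsOrderedPartition (X ++ C :: (m.filter p ++ m.filter (!p ·))) :=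
        hl.perm (((List.filter_append_perm p m).symm.cons C).append_left X)
      obtain ⟨hbout, hbin⟩ := probOf_bubble hinv hresp hl'
      simp only [List.filter_cons, hC, Bool.false_eq_true, if_false, Bool.not_false, if_true]
      simp only [List.append_assoc] at hbout hbin
      refine ⟨fun s hs => (hbout s (by simp [hs])).trans (ihX s (by simp [hs])), ?_⟩
      intro s hs hps
      rcases List.mem_cons.1 hs with rfl | hs
      · exact absurd hps hC
      · exact (ihm s hs hps).trans (hbin s (List.mem_filter.2 ⟨hs, hps⟩))

end Mechanisms

section Refinement

variable {α : Type} [DecidableEq α]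

def splitBy (A C : Finset α) : List (Finset α) :=
  if (C ∩ A).Nonempty ∧ (C \ A).Nonempty then [C ∩ A, C \ A] else [C]

lemma inter_union_sdiff_self (C A : Finset α) : C ∩ A ∪ C \ A = C := by
  ext a; simp only [mem_union, mem_inter, mem_sdiff]; tauto

lemma splitBy_of_not_mixed {A C : Finset α} (h : ¬((C ∩ A).Nonempty ∧ (C \ A).Nonempty)) :
    splitBy A C = [C] :=
  if_neg h

lemma splitBy_of_mixed {A C : Finset α} (h : (C ∩ A).Nonempty ∧ (C \ A).Nonempty) :
    splitBy A C = [C ∩ A, C \ A] :=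
  if_pos h

lemma inter_mem_splitBy {A C : Finset α} (h : (C ∩ A).Nonempty) : C ∩ A ∈ splitBy A C := by
  by_cases hmix : (C \ A).Nonempty
  · simp [splitBy_of_mixed ⟨h, hmix⟩]
  · rw [not_nonempty_iff_eq_empty, sdiff_eq_empty_iff_subset] at hmix
    simp [splitBy_of_not_mixed fun h' => h'.2.ne_empty (sdiff_eq_empty_iff_subset.2 hmix),
      inter_eq_left.2 hmix]

lemma subset_or_disjoint_of_mem_splitBy {A C s : Finset α} (hs : s ∈ splitBy A C) :
    s ⊆ A ∨ Disjoint s A := by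
  unfold splitBy at hs
  split_ifs at hs with hmix
  · simp only [List.mem_cons, List.not_mem_nil, or_false] at hs
    rcases hs with rfl | rfl
    · exact Or.inl inter_subset_right
    · exact Or.inr sdiff_disjoint
  · rw [List.mem_singleton] at hs
    subst hs
    rw [not_and_or, not_nonempty_iff_eq_empty, not_nonempty_iff_eq_empty,
      sdiff_eq_empty_iff_subset, ← disjoint_iff_inter_eq_empty] at hmix
    exact hmix.symm

lemma flatMap_splitBy_splitBy (A C : Finset α) :
    (splitBy A C).flatMap (splitBy A) = splitBy A C := by
  have hself : ∀ s ∈ splitBy A C, splitBy A s = [s] := fun s hs =>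
    splitBy_of_not_mixed fun h => by
      rcases subset_or_disjoint_of_mem_splitBy hs with hsub | hdis
      · exact h.2.ne_empty (sdiff_eq_empty_iff_subset.2 hsub)
      · exact h.1.ne_empty (disjoint_iff_inter_eq_empty.1 hdis)
  rw [List.flatMap_congr hself]
  simp

lemma IsOrderedPartition.refine_splitBy {X Y : List (Finset α)} {A C : Finset α}
    (hl : IsOrderedPartition (X ++ C :: Y)) : IsOrderedPartition (X ++ splitBy A C ++ Y) := by
  by_cases hmix : (C ∩ A).Nonempty ∧ (C \ A).Nonempty
  · rw [← inter_union_sdiff_self C A] at hl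
    simpa [splitBy_of_mixed hmix] using
      (IsOrderedPartition.split_iff disjoint_inf_sdiff hmix.1 hmix.2).1 hl
  · simpa [splitBy_of_not_mixed hmix] using hl

lemma IsOrderedPartition.flatMap_splitBy {A : Finset α} {m : List (Finset α)} :
    ∀ {X : List (Finset α)}, IsOrderedPartition (X ++ m) →
      IsOrderedPartition (X ++ m.flatMap (splitBy A)) := by
  induction m with
  | nil => simp
  | cons C m ih =>
    intro X hl
    simpa using ih (X := X ++ splitBy A C) (by simpa using hl.refine_splitBy (A := A))

variable [Fintype α]

lemma probOf_eq_of_splitBy {x y : α → ℝ} {A C : Finset α}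
    (h : ∀ t ∈ splitBy A C, probOf x t = probOf y t) : probOf x C = probOf y C := by
  by_cases hmix : (C ∩ A).Nonempty ∧ (C \ A).Nonempty
  · rw [splitBy_of_mixed hmix] at h
    rw [← inter_union_sdiff_self C A, probOf_union _ disjoint_inf_sdiff,
      probOf_union _ disjoint_inf_sdiff, h _ (by simp), h _ (by simp)]
  · exact h C (by simp [splitBy_of_not_mixed hmix])

variable {φ : (α → ℕ) → α → ℝ}

lemma SepInvariant.probOf_splitBy (hinv : SepInvariant φ) {X Y : List (Finset α)}
    {A C : Finset α} (hl : IsOrderedPartition (X ++ C :: Y)) :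
    ∀ s ∈ X ++ C :: Y,
      probOf (φ (toRank (X ++ splitBy A C ++ Y))) s = probOf (φ (toRank (X ++ C :: Y))) s := by
  by_cases hmix : (C ∩ A).Nonempty ∧ (C \ A).Nonempty
  · rw [← inter_union_sdiff_self C A] at hl ⊢
    simpa [splitBy_of_mixed hmix, inter_union_sdiff_self] using
      hinv.probOf_split hl hmix.1 hmix.2 disjoint_inf_sdiff
  · simp [splitBy_of_not_mixed hmix]

lemma SepResponsive.probOf_inter_le_splitBy (hresp : SepResponsive φ) {X Y : List (Finset α)}
    {A C : Finset α} (hl : IsOrderedPartition (X ++ C :: Y)) :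
    probOf (φ (toRank (X ++ C :: Y))) (C ∩ A) ≤
      probOf (φ (toRank (X ++ splitBy A C ++ Y))) (C ∩ A) := by
  by_cases hmix : (C ∩ A).Nonempty ∧ (C \ A).Nonempty
  · rw [← inter_union_sdiff_self C A] at hl
    simpa [splitBy_of_mixed hmix, inter_union_sdiff_self] using
      hresp.probOf_split_le hl hmix.1 hmix.2 disjoint_inf_sdiff
  · simp [splitBy_of_not_mixed hmix]

lemma SepInvariant.probOf_flatMap_splitBy (hinv : SepInvariant φ) {A : Finset α}
    {m : List (Finset α)} : ∀ {X : List (Finset α)}, IsOrderedPartition (X ++ m) →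
    ∀ s ∈ X ++ m,
      probOf (φ (toRank (X ++ m.flatMap (splitBy A)))) s = probOf (φ (toRank (X ++ m))) s := by
  induction m with
  | nil => simp
  | cons C m ih =>
    intro X hl s hs
    have hmid := ih (X := X ++ splitBy A C) (by simpa using hl.refine_splitBy (A := A))
    simp only [List.flatMap_cons, ← List.append_assoc]
    rw [← hinv.probOf_splitBy hl s hs]
    rcases List.mem_append.1 hs with hs | hs
    · exact hmid s (by simp [hs])
    rcases List.mem_cons.1 hs with rfl | hs
    · exact probOf_eq_of_splitBy (A := A) fun t ht => hmid t (by simp [ht])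
    · exact hmid s (by simp [hs])

/-- Split the class `C` first, then refine the remaining classes: the part `C ∩ A` gains in
the first step and is untouched afterwards. -/
lemma probOf_inter_le_flatMap_splitBy (hinv : SepInvariant φ) (hresp : SepResponsive φ)
    {A C : Finset α} {l : List (Finset α)} (hl : IsOrderedPartition l) (hC : C ∈ l)
    (hCA : (C ∩ A).Nonempty) :
    probOf (φ (toRank l)) (C ∩ A) ≤
      probOf (φ (toRank (l.flatMap (splitBy A)))) (C ∩ A) := by
  obtain ⟨X, Y, rfl⟩ := List.append_of_mem hC
  have hl' : IsOrderedPartition ([] ++ (X ++ splitBy A C ++ Y)) := by simpa using hl.refine_splitBy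
  calc probOf (φ (toRank (X ++ C :: Y))) (C ∩ A)
      ≤ probOf (φ (toRank (X ++ splitBy A C ++ Y))) (C ∩ A) := hresp.probOf_inter_le_splitBy hl
    _ = probOf (φ (toRank ((X ++ splitBy A C ++ Y).flatMap (splitBy A)))) (C ∩ A) :=
        (hinv.probOf_flatMap_splitBy hl' _ (by simp [inter_mem_splitBy hCA])).symm
    _ = probOf (φ (toRank ((X ++ C :: Y).flatMap (splitBy A)))) (C ∩ A) := by
        simp [List.flatMap_append, flatMap_splitBy_splitBy]

end Refinement

section Collapse

variable {α : Type} [DecidableEq α]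

def unionList (l : List (Finset α)) : Finset α :=
  l.foldr (· ∪ ·) ∅

@[simp]
lemma mem_unionList {l : List (Finset α)} {a : α} :
    a ∈ unionList l ↔ ∃ s ∈ l, a ∈ s := by
  induction l with
  | nil => simp [unionList]
  | cons s l ih => simp [unionList, ← ih]

lemma unionList_cons (s : Finset α) (l : List (Finset α)) :
    unionList (s :: l) = s ∪ unionList l :=
  rfl

lemma disjoint_unionList {s : Finset α} {l : List (Finset α)} (h : ∀ t ∈ l, Disjoint s t) :
    Disjoint s (unionList l) := by
  rw [disjoint_left]
  intro a has hal
  obtain ⟨t, ht, hat⟩ := mem_unionList.1 hal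
  exact disjoint_left.1 (h t ht) has hat

variable [Fintype α]

lemma IsOrderedPartition.unionList_eq_univ {l : List (Finset α)} (hl : IsOrderedPartition l) :
    unionList l = univ :=
  eq_univ_of_forall fun a => mem_unionList.2 (hl.exists_mem a)

lemma IsOrderedPartition.unionList_right {l₁ l₂ : List (Finset α)}
    (hl : IsOrderedPartition (l₁ ++ l₂)) : unionList l₂ = univ \ unionList l₁ := by
  ext a
  obtain ⟨s, hs, has⟩ := hl.exists_mem a
  have hd := (List.pairwise_append.1 hl.pairwise_disjoint).2.2
  simp only [mem_unionList, mem_sdiff, mem_univ, true_and, not_exists, not_and]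
  constructor
  · rintro ⟨t, ht, hat⟩ u hu hau
    exact disjoint_left.1 (hd u hu t ht) hau hat
  · intro h
    rcases List.mem_append.1 hs with hs | hs
    · exact absurd has (h s hs)
    · exact ⟨s, hs, has⟩

lemma sum_probOf_inter_eq {l : List (Finset α)} (hl : l.Pairwise Disjoint) (A : Finset α)
    (x : α → ℝ) : (l.map fun C => probOf x (C ∩ A)).sum = probOf x (unionList l ∩ A) := by
  induction l with
  | nil => simp [unionList, probOf_empty]
  | cons C l ih =>
    have hd : Disjoint (C ∩ A) (unionList l ∩ A) :=
      (disjoint_unionList (List.pairwise_cons.1 hl).1).mono inter_subset_left inter_subset_left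
    rw [List.map_cons, List.sum_cons, ih hl.of_cons, unionList_cons, union_inter_distrib_right,
      probOf_union _ hd]

lemma IsOrderedPartition.sum_probOf_inter {l : List (Finset α)} (hl : IsOrderedPartition l)
    (A : Finset α) (x : α → ℝ) : (l.map fun C => probOf x (C ∩ A)).sum = probOf x A := by
  rw [sum_probOf_inter_eq hl.pairwise_disjoint, hl.unionList_eq_univ, univ_inter]

variable {φ : (α → ℕ) → α → ℝ}

lemma SepInvariant.probOf_collapse (hinv : SepInvariant φ) {l₁ : List (Finset α)}
    {E : Finset α} (g : List (Finset α)) : ∀ {l₂ : List (Finset α)},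
    IsOrderedPartition (l₁ ++ E :: g ++ l₂) →
    IsOrderedPartition (l₁ ++ unionList (E :: g) :: l₂) ∧
    ∀ s ∈ l₁ ++ unionList (E :: g) :: l₂,
      probOf (φ (toRank (l₁ ++ unionList (E :: g) :: l₂))) s =
        probOf (φ (toRank (l₁ ++ E :: g ++ l₂))) s := by
  induction g using List.reverseRecOn with
  | nil =>
    intro l₂ hl
    simpa [unionList] using hl
  | append_singleton g F ih =>
    intro l₂ hl
    obtain ⟨hv, hp⟩ := ih (l₂ := F :: l₂) (by simpa using hl)
    set U := unionList (E :: g)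
    have hU := hv.nonempty U (by simp)
    have hF := hv.nonempty F (by simp)
    have hd : Disjoint U F :=
      List.rel_of_pairwise_cons (List.pairwise_append.1 hv.pairwise_disjoint).2.1 (by simp)
    have hunion : unionList (E :: (g ++ [F])) = U ∪ F := by ext; simp [U, or_assoc]
    have hmerged := (IsOrderedPartition.split_iff hd hU hF).2 hv
    have hsplit := hinv.probOf_split hmerged hU hF hd
    have horig : l₁ ++ E :: (g ++ [F]) ++ l₂ = l₁ ++ E :: g ++ F :: l₂ := by simp
    rw [hunion, horig]
    refine ⟨hmerged, fun s hs => ?_⟩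
    rw [← hsplit s hs]
    rcases List.mem_append.1 hs with hs | hs
    · exact hp s (by simp [hs])
    rcases List.mem_cons.1 hs with rfl | hs
    · rw [probOf_union _ hd, probOf_union _ hd, hp U (by simp), hp F (by simp)]
    · exact hp s (by simp [hs])

def twoClass (A : Finset α) : α → ℕ :=
  toRank [A, univ \ A]

lemma SepInvariant.probOf_twoClass (hinv : SepInvariant φ) {LA LN : List (Finset α)}
    (hl : IsOrderedPartition (LA ++ LN)) (hA : LA ≠ []) (hN : LN ≠ []) :
    probOf (φ (toRank (LA ++ LN))) (unionList LA) =
      probOf (φ (twoClass (unionList LA))) (unionList LA) := by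
  obtain ⟨E, g, rfl⟩ := List.exists_cons_of_ne_nil hA
  obtain ⟨F, g', rfl⟩ := List.exists_cons_of_ne_nil hN
  have hN' := hl.unionList_right
  obtain ⟨hv₁, hp₁⟩ :=
    hinv.probOf_collapse (l₁ := []) (E := E) g (l₂ := F :: g') (by simpa using hl)
  obtain ⟨-, hp₂⟩ :=
    hinv.probOf_collapse (l₁ := [unionList (E :: g)]) (E := F) g' (l₂ := [])
      (by simpa using hv₁)
  rw [hN'] at hp₂
  simp only [List.nil_append, List.cons_append, List.append_nil] at hp₁ hp₂ ⊢
  rw [← hp₁ _ (by simp), ← hp₂ _ (by simp)]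
  rfl

end Collapse

section TwoClass

variable {α : Type} [Fintype α] [DecidableEq α] {φ : (α → ℕ) → α → ℝ}

theorem probOf_le_twoClass (hinv : SepInvariant φ) (hresp : SepResponsive φ)
    {l : List (Finset α)} (hl : IsOrderedPartition l) {A : Finset α} (hA : A.Nonempty)
    (hAc : (univ \ A).Nonempty) :
    probOf (φ (toRank l)) A ≤ probOf (φ (twoClass A)) A := by
  set I := l.flatMap (splitBy A)
  have hI : IsOrderedPartition I := by
    simpa using IsOrderedPartition.flatMap_splitBy (X := []) (by simpa using hl)
  set p : Finset α → Bool := fun s => decide (s ⊆ A)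
  have hS : IsOrderedPartition (I.filter p ++ I.filter (!p ·)) :=
    hI.perm (List.filter_append_perm p I).symm
  have hunion : unionList (I.filter p) = A := by
    ext a
    simp only [mem_unionList, List.mem_filter, p, decide_eq_true_eq]
    refine ⟨fun ⟨s, ⟨_, hsA⟩, has⟩ => hsA has, fun ha => ?_⟩
    obtain ⟨s, hs, has⟩ := hI.exists_mem a
    obtain ⟨C, -, hsC⟩ := List.mem_flatMap.1 hs
    refine ⟨s, ⟨hs, ?_⟩, has⟩
    exact (subset_or_disjoint_of_mem_splitBy hsC).resolve_right
      fun hd => disjoint_left.1 hd has ha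
  have hne : ∀ {L : List (Finset α)} {B : Finset α},
      unionList L = B → B.Nonempty → L ≠ [] := by
    rintro L B rfl ⟨a, ha⟩ rfl
    simp at ha
  have hsort := (probOf_filter_append_filter hinv hresp p (X := []) (by simpa using hI)).2
  calc probOf (φ (toRank l)) A
      = (l.map fun C => probOf (φ (toRank l)) (C ∩ A)).sum := (hl.sum_probOf_inter A _).symm
    _ ≤ (l.map fun C => probOf (φ (toRank (I.filter p ++ I.filter (!p ·)))) (C ∩ A)).sum := by
      refine List.sum_le_sum fun C hC => ?_
      rcases (C ∩ A).eq_empty_or_nonempty with h | h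
      · simp [h, probOf_empty]
      · have hmem : C ∩ A ∈ I := List.mem_flatMap.2 ⟨C, hC, inter_mem_splitBy h⟩
        exact (probOf_inter_le_flatMap_splitBy hinv hresp hl hC h).trans
          (by simpa using hsort _ hmem (by simp [p]))
    _ = probOf (φ (toRank (I.filter p ++ I.filter (!p ·)))) A := hl.sum_probOf_inter A _
    _ = probOf (φ (twoClass A)) A := by
      have h := hinv.probOf_twoClass hS (hne hunion hA)
        (hne (hS.unionList_right.trans (by rw [hunion])) hAc)
      rwa [hunion] at h

end TwoClass

section ClassList

variable {α : Type} [Fintype α]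

def classList (R : α → ℕ) : List (Finset α) :=
  (List.range (univ.sup R + 1)).map (classOf R)

lemma lt_length_classList (R : α → ℕ) (a : α) : R a < (classList R).length := by
  simpa [classList, Nat.lt_succ_iff] using le_sup (f := R) (mem_univ a)

lemma pairwise_disjoint_classList (R : α → ℕ) : (classList R).Pairwise Disjoint := by
  refine List.pairwise_map.2 (List.nodup_range.imp fun hne => ?_)
  rw [disjoint_left]
  intro a ha ha'
  exact hne ((mem_classOf.1 ha).symm.trans (mem_classOf.1 ha'))

lemma Canonical.isOrderedPartition_classList [Nonempty α] {R : α → ℕ} (hR : Canonical R) :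
    IsOrderedPartition (classList R) where
  pairwise_disjoint := pairwise_disjoint_classList R
  nonempty s hs := by
    obtain ⟨k, hk, rfl⟩ := List.mem_map.1 hs
    obtain ⟨b, -, hb⟩ := exists_mem_eq_sup univ univ_nonempty R
    obtain ⟨c, hc⟩ := hR b k (by rw [← hb]; simpa [Nat.lt_succ_iff] using hk)
    exact ⟨c, mem_classOf.2 hc⟩
  exists_mem a := ⟨classOf R (R a), List.mem_map.2 ⟨R a, by
    simpa [Nat.lt_succ_iff] using le_sup (f := R) (mem_univ a), rfl⟩, mem_classOf.2 rfl⟩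

variable [DecidableEq α]

lemma toRank_classList (R : α → ℕ) : toRank (classList R) = R :=
  funext fun a => toRank_eq_of_mem_getElem (pairwise_disjoint_classList R)
    (lt_length_classList R a) (by simp [classList])

lemma unionList_take_classList (R : α → ℕ) (k : ℕ) :
    unionList ((classList R).take (k + 1)) = upperContour R k := by
  ext a
  have := lt_length_classList R a
  simp only [classList, List.length_map, List.length_range] at this
  simp [classList, ← List.map_take]
  omega

lemma SepInvariant.probOf_upperContour_eq_twoClass {φ : (α → ℕ) → α → ℝ}
    (hinv : SepInvariant φ) {R : α → ℕ} (hR : Canonical R) {k : ℕ}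
    (hk : (univ \ upperContour R k).Nonempty) :
    probOf (φ R) (upperContour R k) =
      probOf (φ (twoClass (upperContour R k))) (upperContour R k) := by
  obtain ⟨b, hb⟩ := hk
  have : Nonempty α := ⟨b⟩
  have hkb : k + 1 < (classList R).length := by
    have := lt_length_classList R b
    simp at hb
    omega
  have hl := hR.isOrderedPartition_classList
  rw [← List.take_append_drop (k + 1) (classList R)] at hl
  have h := hinv.probOf_twoClass hl (by simp [List.take_eq_nil_iff, ← List.length_pos_iff]; omega)
    (by simp [List.drop_eq_nil_iff]; omega)
  rwa [List.take_append_drop, toRank_classList, unionList_take_classList] at h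

end ClassList

theorem strategyproof_of_sepInvariant {α : Type} [Fintype α] {φ : (α → ℕ) → α → ℝ}
    (hlot : ∀ R, IsLottery (φ R)) (hinv : SepInvariant φ) (hresp : SepResponsive φ) :
    Strategyproof φ := by
  classical
  intro R R' hR hR' a
  have : Nonempty α := ⟨a⟩
  show probOf (φ R') (upperContour R (R a)) ≤ probOf (φ R) (upperContour R (R a))
  by_cases hU : (univ \ upperContour R (R a)).Nonempty
  · have h := probOf_le_twoClass hinv hresp hR'.isOrderedPartition_classList ⟨a, by simp⟩ hU
    rwa [toRank_classList, ← hinv.probOf_upperContour_eq_twoClass hR hU] at h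
  · rw [not_nonempty_iff_eq_empty, sdiff_eq_empty_iff_subset, univ_subset_iff] at hU
    rw [hU, probOf_univ (hlot R), probOf_univ (hlot R')]

/-- Decomposition of strategyproofness: a mechanism is strategyproof if and only if
it is separation monotonic (separation responsive and separation direct),
separation upper invariant, and separation lower invariant. -/
theorem sp_decomposition {α : Type} [Fintype α]
    (φ : (α → ℕ) → α → ℝ) (hlot : ∀ R, IsLottery (φ R)) :
    Strategyproof φ ↔
      (SepResponsive φ ∧ SepDirect φ) ∧
      SepUpperInvariant φ ∧ SepLowerInvariant φ := by
  refine ⟨fun hsp => ?_, fun ⟨⟨hresp, _⟩, hup, hlow⟩ => ?_⟩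
  · have hinv := hsp.sepInvariant hlot
    exact ⟨⟨hsp.sepResponsive hlot, hinv.sepDirect⟩, hinv.sepUpperInvariant,
      hinv.sepLowerInvariant⟩
  · exact strategyproof_of_sepInvariant hlot (sepInvariant_of_upper_lower hlot hup hlow) hresp
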